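/- Let A, X, Y be jointly distributed random variables with finite ranges satisfying condition (B): for all a, x, y, if p(a,x) > 0 and p(a,y) > 0 then p(a,x,y) > 0. If p(a,x)·p(a,y)·p(x,y) ≤ p(a)·p(x)·p(y)·p(a,x,y) holds for all a, x, y, then in fact p(a,x)·p(a,y)·p(x,y) = p(a)·p(x)·p(y)·p(a,x,y) for all a, x, y. -/
import Mathlib


open Finset

noncomputable section

/-- Probability of an event under a distribution on a finite sample space. -/
def pr {Ω : Type*} [Fintype Ω] (p : Ω → ℝ) (E : Set Ω) : ℝ :=
  ∑ ω, E.indicator p ω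

/-- `p` is a probability mass function on the finite sample space `Ω`. -/
def IsPMF {Ω : Type*} [Fintype Ω] (p : Ω → ℝ) : Prop :=
  (∀ ω, 0 ≤ p ω) ∧ ∑ ω, p ω = 1

/-- Shannon entropy (base 2) of a random variable `V` on a finite sample space. -/
def ent {Ω β : Type*} [Fintype Ω] [Fintype β] (p : Ω → ℝ) (V : Ω → β) : ℝ :=
  -∑ v, pr p {ω | V ω = v} * Real.logb 2 (pr p {ω | V ω = v})

/-- Conditional Shannon entropy (base 2): `H(V | W)`. -/
def condEnt {Ω β γ : Type*} [Fintype Ω] [Fintype β] [Fintype γ]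
    (p : Ω → ℝ) (V : Ω → β) (W : Ω → γ) : ℝ :=
  ent p (fun ω => (V ω, W ω)) - ent p W

/-- Mutual information (base 2): `I(V : W)`. -/
def mi {Ω β γ : Type*} [Fintype Ω] [Fintype β] [Fintype γ]
    (p : Ω → ℝ) (V : Ω → β) (W : Ω → γ) : ℝ :=
  ent p V + ent p W - ent p (fun ω => (V ω, W ω))

/-- Conditional mutual information (base 2): `I(V : W | U)`. -/
def cmi {Ω β γ δ : Type*} [Fintype Ω] [Fintype β] [Fintype γ] [Fintype δ]
    (p : Ω → ℝ) (V : Ω → β) (W : Ω → γ) (U : Ω → δ) : ℝ :=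
  ent p (fun ω => (V ω, U ω)) + ent p (fun ω => (W ω, U ω))
    - ent p (fun ω => (V ω, W ω, U ω)) - ent p U

end

section aux
variable {Ω : Type*} [Fintype Ω] {p : Ω → ℝ}

lemma pr_nonneg (hp : ∀ ω, 0 ≤ p ω) (E : Set Ω) : 0 ≤ pr p E :=
  Finset.sum_nonneg fun ω _ => Set.indicator_nonneg (fun ω _ => hp ω) ω

lemma pr_mono (hp : ∀ ω, 0 ≤ p ω) {E F : Set Ω} (h : E ⊆ F) : pr p E ≤ pr p F :=
  Finset.sum_le_sum fun ω _ => Set.indicator_le_indicator_of_subset h hp ω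

lemma pr_margin {α : Type*} [Fintype α] (V : Ω → α) (Q : Ω → Prop) :
    ∑ a, pr p {ω | V ω = a ∧ Q ω} = pr p {ω | Q ω} := by
  classical
  unfold pr
  rw [Finset.sum_comm]
  refine Finset.sum_congr rfl fun ω _ => ?_
  simp only [Set.indicator_apply, Set.mem_setOf_eq]
  by_cases hq : Q ω
  · simp [hq]
  · simp [hq]

lemma pr_total {α : Type*} [Fintype α] (V : Ω → α) :
    ∑ a, pr p {ω | V ω = a} = ∑ ω, p ω := by
  classical
  have := pr_margin (p := p) V (fun _ => True)
  simp only [and_true] at this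
  rw [this]
  unfold pr
  simp [Set.indicator_apply]
end aux


/-- Under condition (B), if `p(a,x)p(a,y)p(x,y) ≤ p(a)p(x)p(y)p(a,x,y)` holds for all
`a,x,y`, then it is in fact an equality everywhere. -/
theorem stmt_12 {Ω α χ υ : Type*} [Fintype Ω] [Fintype α] [Fintype χ] [Fintype υ]
    (p : Ω → ℝ) (hp : IsPMF p) (A : Ω → α) (X : Ω → χ) (Y : Ω → υ)
    (hB : ∀ (a : α) (x : χ) (y : υ),
      0 < pr p {ω | A ω = a ∧ X ω = x} →
      0 < pr p {ω | A ω = a ∧ Y ω = y} →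
      0 < pr p {ω | A ω = a ∧ X ω = x ∧ Y ω = y})
    (hineq : ∀ (a : α) (x : χ) (y : υ),
      pr p {ω | A ω = a ∧ X ω = x} * pr p {ω | A ω = a ∧ Y ω = y}
          * pr p {ω | X ω = x ∧ Y ω = y} ≤
        pr p {ω | A ω = a} * pr p {ω | X ω = x} * pr p {ω | Y ω = y}
          * pr p {ω | A ω = a ∧ X ω = x ∧ Y ω = y}) :
    ∀ (a : α) (x : χ) (y : υ),
      pr p {ω | A ω = a ∧ X ω = x} * pr p {ω | A ω = a ∧ Y ω = y}
          * pr p {ω | X ω = x ∧ Y ω = y} =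
        pr p {ω | A ω = a} * pr p {ω | X ω = x} * pr p {ω | Y ω = y}
          * pr p {ω | A ω = a ∧ X ω = x ∧ Y ω = y} := by
  classical
  obtain ⟨hp0, hp1⟩ := hp
  set pa : α → ℝ := fun a => pr p {ω | A ω = a} with hpa_def
  set px : χ → ℝ := fun x => pr p {ω | X ω = x} with hpx_def
  set py : υ → ℝ := fun y => pr p {ω | Y ω = y} with hpy_def
  set pax : α → χ → ℝ := fun a x => pr p {ω | A ω = a ∧ X ω = x} with hpax_def
  set pay : α → υ → ℝ := fun a y => pr p {ω | A ω = a ∧ Y ω = y} with hpay_def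
  set pxy : χ → υ → ℝ := fun x y => pr p {ω | X ω = x ∧ Y ω = y} with hpxy_def
  set paxy : α → χ → υ → ℝ := fun a x y => pr p {ω | A ω = a ∧ X ω = x ∧ Y ω = y}
    with hpaxy_def
  -- basic nonnegativity
  have hnn : ∀ E : Set Ω, 0 ≤ pr p E := pr_nonneg hp0
  -- monotonicity facts
  have hax_le : ∀ a x, pax a x ≤ pa a := fun a x =>
    pr_mono hp0 (fun ω h => h.1)
  have hay_le : ∀ a y, pay a y ≤ pa a := fun a y =>
    pr_mono hp0 (fun ω h => h.1)
  have haxy_le_xy : ∀ a x y, paxy a x y ≤ pxy x y := fun a x y =>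
    pr_mono hp0 (fun ω h => h.2)
  -- marginal sums
  have hsum_pax : ∀ x, ∑ a, pax a x = px x := fun x => pr_margin A (fun ω => X ω = x)
  have hsum_pay : ∀ y, ∑ a, pay a y = py y := fun y => pr_margin A (fun ω => Y ω = y)
  have hsum_paxy : ∀ x y, ∑ a, paxy a x y = pxy x y := fun x y =>
    pr_margin A (fun ω => X ω = x ∧ Y ω = y)
  have hsum_pax' : ∀ a, ∑ x, pax a x = pa a := by
    intro a
    have h := pr_margin (p := p) X (fun ω => A ω = a)
    have he : ∀ x, pax a x = pr p {ω | X ω = x ∧ A ω = a} := by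
      intro x
      simp only [hpax_def]
      congr 1
      ext ω; exact and_comm
    calc ∑ x, pax a x = ∑ x, pr p {ω | X ω = x ∧ A ω = a} := by
          exact Finset.sum_congr rfl fun x _ => he x
      _ = pa a := h
  have hsum_pay' : ∀ a, ∑ y, pay a y = pa a := by
    intro a
    have h := pr_margin (p := p) Y (fun ω => A ω = a)
    have he : ∀ y, pay a y = pr p {ω | Y ω = y ∧ A ω = a} := by
      intro y
      simp only [hpay_def]
      congr 1
      ext ω; exact and_comm
    calc ∑ y, pay a y = ∑ y, pr p {ω | Y ω = y ∧ A ω = a} := by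
          exact Finset.sum_congr rfl fun y _ => he y
      _ = pa a := h
  have hsum_pa : ∑ a, pa a = 1 := by rw [hpa_def]; rw [pr_total A]; exact hp1
  have hsum_px : ∑ x, px x = 1 := by rw [hpx_def]; rw [pr_total X]; exact hp1
  have hsum_py : ∑ y, py y = 1 := by rw [hpy_def]; rw [pr_total Y]; exact hp1
  -- the function f
  set f : α → χ → υ → ℝ := fun a x y => pax a x * pay a y / pa a with hf_def
  have hf_nn : ∀ a x y, 0 ≤ f a x y := fun a x y =>
    div_nonneg (mul_nonneg (hnn _) (hnn _)) (hnn _)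
  -- per-a inequality
  have haineq : ∀ a x y, f a x y * pxy x y ≤ px x * py y * paxy a x y := by
    intro a x y
    rcases eq_or_lt_of_le (show (0:ℝ) ≤ pa a from hnn _) with h0 | hpos
    · have hz : pax a x = 0 := le_antisymm (h0 ▸ hax_le a x) (hnn _)
      simp only [hf_def, hz, zero_mul, zero_div]
      exact mul_nonneg (mul_nonneg (hnn _) (hnn _)) (hnn _)
    · have h := hineq a x y
      rw [hf_def]
      rw [div_mul_eq_mul_div, div_le_iff₀ hpos]
      calc pax a x * pay a y * pxy x y ≤ pa a * px x * py y * paxy a x y := h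
        _ = px x * py y * paxy a x y * pa a := by ring
  -- step 1: sum over a is ≤ px * py
  have h1 : ∀ x y, ∑ a, f a x y ≤ px x * py y := by
    intro x y
    rcases eq_or_lt_of_le (show (0:ℝ) ≤ pxy x y from hnn _) with h0 | hpos
    · -- pxy x y = 0; every f a x y = 0
      have hz : ∀ a, f a x y = 0 := by
        intro a
        rcases eq_or_lt_of_le (show (0:ℝ) ≤ pax a x from hnn _) with hx0 | hxpos
        · simp [hf_def, ← hx0]
        · rcases eq_or_lt_of_le (show (0:ℝ) ≤ pay a y from hnn _) with hy0 | hypos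
          · simp [hf_def, ← hy0]
          · exfalso
            have hBp := hB a x y hxpos hypos
            have h2 : paxy a x y ≤ 0 := h0 ▸ haxy_le_xy a x y
            exact absurd (le_antisymm h2 (le_of_lt hBp)) (ne_of_gt hBp)
      rw [Finset.sum_congr rfl fun a _ => hz a]
      simp only [Finset.sum_const_zero]
      exact mul_nonneg (hnn _) (hnn _)
    · have hs : (∑ a, f a x y) * pxy x y ≤ px x * py y * pxy x y := by
        rw [Finset.sum_mul]
        calc ∑ a, f a x y * pxy x y ≤ ∑ a, px x * py y * paxy a x y :=
              Finset.sum_le_sum fun a _ => haineq a x y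
          _ = px x * py y * pxy x y := by rw [← Finset.mul_sum, hsum_paxy]
      exact le_of_mul_le_mul_right hs hpos
  -- totals are equal
  have htot : ∑ x, ∑ y, ∑ a, f a x y = ∑ x, ∑ y, px x * py y := by
    have hL : ∑ x, ∑ y, ∑ a, f a x y = 1 := by
      have hswap : ∑ x, ∑ y, ∑ a, f a x y = ∑ a, ∑ x, ∑ y, f a x y :=
        calc ∑ x, ∑ y, ∑ a, f a x y = ∑ x, ∑ a, ∑ y, f a x y :=
              Finset.sum_congr rfl fun x _ => Finset.sum_comm
          _ = ∑ a, ∑ x, ∑ y, f a x y := Finset.sum_comm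
      rw [hswap]
      have : ∀ a, ∑ x, ∑ y, f a x y = pa a := by
        intro a
        simp only [hf_def]
        have : ∑ x, ∑ y, pax a x * pay a y / pa a
            = (∑ x, pax a x) * (∑ y, pay a y) / pa a := by
          rw [Finset.sum_mul_sum]
          rw [Finset.sum_div]
          exact Finset.sum_congr rfl fun x _ => by rw [Finset.sum_div]
        rw [this, hsum_pax', hsum_pay']
        rcases eq_or_ne (pa a) 0 with h | h
        · simp [h]
        · field_simp
      rw [Finset.sum_congr rfl fun a _ => this a, hsum_pa]
    have hR : ∑ x, ∑ y, px x * py y = 1 := by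
      rw [← Finset.sum_mul_sum, hsum_px, hsum_py, one_mul]
    rw [hL, hR]
  -- equality per x of inner sums
  have hx_eq : ∀ x, ∑ y, ∑ a, f a x y = ∑ y, px x * py y := by
    intro x
    have := (Finset.sum_eq_sum_iff_of_le
      (fun x (_ : x ∈ (univ : Finset χ)) =>
        Finset.sum_le_sum fun y (_ : y ∈ (univ : Finset υ)) => h1 x y)).mp htot
    exact this x (mem_univ x)
  -- key equality
  have key : ∀ x y, ∑ a, f a x y = px x * py y := by
    intro x y
    have := (Finset.sum_eq_sum_iff_of_le
      (fun y (_ : y ∈ (univ : Finset υ)) => h1 x y)).mp (hx_eq x)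
    exact this y (mem_univ y)
  -- final: per-a equality when pxy > 0
  intro a x y
  rcases eq_or_lt_of_le (show (0:ℝ) ≤ pxy x y from hnn _) with h0 | hpos
  · have hz : paxy a x y = 0 := le_antisymm (h0 ▸ haxy_le_xy a x y) (hnn _)
    show pax a x * pay a y * pxy x y = pa a * px x * py y * paxy a x y
    rw [hz, ← h0]; ring
  · have hsumeq : ∑ a, f a x y * pxy x y = ∑ a, px x * py y * paxy a x y := by
      rw [← Finset.sum_mul, key, ← Finset.mul_sum, hsum_paxy]
    have heq := (Finset.sum_eq_sum_iff_of_le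
      (fun a (_ : a ∈ (univ : Finset α)) => haineq a x y)).mp hsumeq a (mem_univ a)
    -- heq : f a x y * pxy x y = px x * py y * paxy a x y
    show pax a x * pay a y * pxy x y = pa a * px x * py y * paxy a x y
    rcases eq_or_lt_of_le (show (0:ℝ) ≤ pa a from hnn _) with hpa0 | hpapos
    · have hx0 : pax a x = 0 := le_antisymm (hpa0 ▸ hax_le a x) (hnn _)
      rw [hx0, ← hpa0]; ring
    · rw [hf_def] at heq
      simp only at heq
      rw [div_mul_eq_mul_div, div_eq_iff (ne_of_gt hpapos)] at heq
      linear_combination heq
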